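/- Every totally positive indecomposable element α of ℤ[√D] satisfies N(α) ≤ D/N, where N is the minimum of |N(β)| over all β ∈ ℤ[√D] of negative norm. -/

import Mathlib

/-!
If `α = x + y √D` is indecomposable then `x, y` are coprime, since otherwise `α = g β` with
`g ≥ 2` splits as `β + (g - 1) β`. Choose `δ = u + v √D` with `x v - y u = 1`; shifting by
multiples of `α` we may assume `0 < δ < α`. Since `δ α' - δ' α = 2 √D`, the difference `α - δ` is
totally positive, so indecomposability forbids `δ` to be, i.e. `N(δ) < 0` and `-N(δ) ≥ N`.
Finally `N(α) (-N(δ)) + (u x - D v y)² = D (x v - y u)² = D`.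
-/

open Real

theorem Nat.not_isSquare_of_mod_four {D : ℕ} (h : D % 4 = 2 ∨ D % 4 = 3) : ¬ IsSquare D := by
  rintro ⟨k, rfl⟩
  have hk : k % 4 < 4 := Nat.mod_lt _ (by norm_num)
  rcases h with h | h <;> interval_cases hk4 : k % 4 <;> simp [Nat.mul_mod, hk4] at h

theorem eq_zero_of_add_mul_sqrt_eq_zero {D : ℕ} (hD : ¬ IsSquare D) {a b : ℤ}
    (h : (a : ℝ) + b * √D = 0) : a = 0 ∧ b = 0 := by
  obtain rfl | hb := eq_or_ne b 0
  · simpa using h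
  · exact absurd h (((irrational_sqrt_natCast_iff.2 hD).intCast_mul hb).intCast_add a).ne_zero

theorem norm_mul_neg_norm_le_of_det_eq_one {D x y u v : ℤ} (h : x * v - y * u = 1) :
    (x ^ 2 - D * y ^ 2) * (D * v ^ 2 - u ^ 2) ≤ D := by
  have key : (x ^ 2 - D * y ^ 2) * (D * v ^ 2 - u ^ 2) + (u * x - D * v * y) ^ 2 =
      D * (x * v - y * u) ^ 2 := by ring
  rw [h, one_pow, mul_one] at key
  linarith [sq_nonneg (u * x - D * v * y)]

theorem intCast_norm_eq_mul_conj (D : ℕ) (a b : ℤ) :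
    ((a ^ 2 - D * b ^ 2 : ℤ) : ℝ) = (a + b * √D) * (a - b * √D) := by
  push_cast
  linear_combination (b : ℝ) ^ 2 * (sq_sqrt (Nat.cast_nonneg D : (0 : ℝ) ≤ D))

def IsTotallyPositive (D : ℕ) (a b : ℤ) : Prop :=
  0 < (a : ℝ) + b * √D ∧ 0 < (a : ℝ) - b * √D

def IsDecomposable (D : ℕ) (x y : ℤ) : Prop :=
  ∃ a b a' b' : ℤ,
    IsTotallyPositive D a b ∧ IsTotallyPositive D a' b' ∧ x = a + a' ∧ y = b + b'

namespace IsTotallyPositive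

variable {D : ℕ} {x y u v g : ℤ}

theorem norm_pos (h : IsTotallyPositive D x y) : 0 < x ^ 2 - D * y ^ 2 := by
  have := intCast_norm_eq_mul_conj D x y ▸ mul_pos h.1 h.2
  exact_mod_cast this

theorem of_norm_pos (h : 0 < (x : ℝ) + y * √D) (hn : 0 < x ^ 2 - D * y ^ 2) :
    IsTotallyPositive D x y := by
  refine ⟨h, pos_of_mul_pos_right ?_ h.le⟩
  rw [← intCast_norm_eq_mul_conj]
  exact_mod_cast hn

theorem mul_iff (hg : 0 < g) :
    IsTotallyPositive D (g * x) (g * y) ↔ IsTotallyPositive D x y := by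
  have hg' : (0 : ℝ) < g := by exact_mod_cast hg
  simp only [IsTotallyPositive, Int.cast_mul, mul_assoc, ← mul_add, ← mul_sub,
    mul_pos_iff_of_pos_left hg']

theorem isDecomposable_mul (h : IsTotallyPositive D (g * x) (g * y)) (hg : 1 < g) :
    IsDecomposable D (g * x) (g * y) := by
  have h₁ := (mul_iff (by omega)).1 h
  exact ⟨x, y, (g - 1) * x, (g - 1) * y, h₁, (mul_iff (by omega)).2 h₁, by ring, by ring⟩

theorem isCoprime (h : IsTotallyPositive D x y) (hx : ¬ IsDecomposable D x y) : IsCoprime x y := by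
  rw [Int.isCoprime_iff_gcd_eq_one]
  by_contra hg
  have hg0 : x.gcd y ≠ 0 := by
    rintro h0
    obtain ⟨rfl, rfl⟩ := Int.gcd_eq_zero_iff.1 h0
    simpa using h.1
  obtain ⟨a, ha⟩ := Int.gcd_dvd_left x y
  obtain ⟨b, hb⟩ := Int.gcd_dvd_right x y
  have hg1 : (1 : ℤ) < x.gcd y := by omega
  generalize (x.gcd y : ℤ) = g at ha hb hg1
  subst ha hb
  exact hx (h.isDecomposable_mul hg1)

theorem sub_of_det_eq_one (h : IsTotallyPositive D x y) (hdet : x * v - y * u = 1)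
    (hlt : (u : ℝ) + v * √D < x + y * √D) : IsTotallyPositive D (x - u) (y - v) := by
  have hdet' : (x : ℝ) * v - y * u = 1 := by exact_mod_cast hdet
  -- `α (α' - δ') - α' (α - δ) = δ α' - δ' α = 2 √D (x v - y u)` for `α = x + y √D`, `δ = u + v √D`
  have key : (x + y * √D) * ((x - u) - (y - v) * √D) =
      (x - y * √D) * ((x - u) + (y - v) * √D) + 2 * √D := by
    linear_combination 2 * √D * hdet'
  unfold IsTotallyPositive
  push_cast
  refine ⟨by linarith, pos_of_mul_pos_right ?_ h.1.le⟩
  rw [key]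
  have := mul_pos h.2 (sub_pos.2 hlt)
  have := sqrt_nonneg (D : ℝ)
  nlinarith

end IsTotallyPositive

section

variable {D : ℕ} {x y u v : ℤ}

theorem exists_det_eq_one_mem_Ioo (hD : ¬ IsSquare D) (hxy : IsCoprime x y)
    (hα : 0 < (x : ℝ) + y * √D) :
    ∃ u v : ℤ, x * v - y * u = 1 ∧ 0 < (u : ℝ) + v * √D ∧
      (u : ℝ) + v * √D < x + y * √D := by
  obtain ⟨a, b, hab⟩ := hxy
  -- the solutions `(-b + m x, a + m y)` of `x v - y u = 1` move by multiples of `x + y √D`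
  obtain ⟨m, ⟨hpos, hle⟩, -⟩ := existsUnique_add_zsmul_mem_Ioc hα (-b + a * √D) 0
  rw [zsmul_eq_mul] at hpos hle
  rw [zero_add] at hle
  refine ⟨-b + m * x, a + m * y, by linear_combination hab, by push_cast; linarith, ?_⟩
  refine lt_of_le_of_ne (by push_cast; linarith) fun heq => ?_
  obtain ⟨hu, hv⟩ := eq_zero_of_add_mul_sqrt_eq_zero hD
    (a := -b + m * x - x) (b := a + m * y - y) (by push_cast at heq ⊢; linarith)
  exact one_ne_zero (by linear_combination x * hv - y * hu - hab : (1 : ℤ) = 0)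

theorem norm_ne_zero_of_det_eq_one (hD : ¬ IsSquare D) (hdet : x * v - y * u = 1) :
    u ^ 2 - D * v ^ 2 ≠ 0 := by
  intro h0
  have hprod := intCast_norm_eq_mul_conj D u v
  rw [h0, Int.cast_zero, eq_comm, mul_eq_zero] at hprod
  obtain ⟨rfl, rfl⟩ : u = 0 ∧ v = 0 := by
    rcases hprod with h | h
    · exact eq_zero_of_add_mul_sqrt_eq_zero hD h
    · simpa using eq_zero_of_add_mul_sqrt_eq_zero hD (a := u) (b := -v) (by push_cast; linarith)
  simp at hdet

end

theorem stmt11_general (D : ℕ) (hD4 : D % 4 = 2 ∨ D % 4 = 3)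
    (N : ℕ)
    (hN : IsLeast {n : ℕ | 0 < n ∧ ∃ a b : ℤ, a ^ 2 - (D : ℤ) * b ^ 2 = -(n : ℤ)} N)
    (x y : ℤ)
    (hpos : 0 < (x : ℝ) + y * Real.sqrt D ∧ 0 < (x : ℝ) - y * Real.sqrt D)
    (hindec : ¬ ∃ a b a' b' : ℤ,
      (0 < (a : ℝ) + b * Real.sqrt D ∧ 0 < (a : ℝ) - b * Real.sqrt D) ∧
      (0 < (a' : ℝ) + b' * Real.sqrt D ∧ 0 < (a' : ℝ) - b' * Real.sqrt D) ∧
      x = a + a' ∧ y = b + b') :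
    (x : ℝ) ^ 2 - (D : ℝ) * (y : ℝ) ^ 2 ≤ (D : ℝ) / (N : ℝ) := by
  have hD := Nat.not_isSquare_of_mod_four hD4
  have hα : IsTotallyPositive D x y := hpos
  obtain ⟨u, v, hdet, hδ, hδα⟩ := exists_det_eq_one_mem_Ioo hD (hα.isCoprime hindec) hα.1
  have hδ_not : ¬ IsTotallyPositive D u v := fun hδ_tp =>
    hindec ⟨x - u, y - v, u, v, hα.sub_of_det_eq_one hdet hδα, hδ_tp, by ring, by ring⟩
  have hδ_norm : u ^ 2 - D * v ^ 2 < 0 :=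
    lt_of_le_of_ne (not_lt.1 (mt (IsTotallyPositive.of_norm_pos hδ) hδ_not))
      (norm_ne_zero_of_det_eq_one hD hdet)
  have hN_le : (N : ℤ) ≤ D * v ^ 2 - u ^ 2 := by
    have := @hN.2 (D * v ^ 2 - u ^ 2).toNat
      ⟨by omega, u, v, by rw [Int.toNat_of_nonneg (by omega)]; ring⟩
    omega
  have hbound : (x ^ 2 - D * y ^ 2) * N ≤ (D : ℤ) :=
    (mul_le_mul_of_nonneg_left hN_le hα.norm_pos.le).trans
      (norm_mul_neg_norm_le_of_det_eq_one hdet)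
  rw [le_div_iff₀ (by exact_mod_cast hN.1.1)]
  exact_mod_cast hbound

theorem stmt11 (D : ℕ) (hDsf : Squarefree D) (hD4 : D % 4 = 2 ∨ D % 4 = 3)
    (N : ℕ)
    (hN : IsLeast {n : ℕ | 0 < n ∧ ∃ a b : ℤ, a ^ 2 - (D : ℤ) * b ^ 2 = -(n : ℤ)} N)
    (x y : ℤ)
    (hpos : 0 < (x : ℝ) + y * Real.sqrt D ∧ 0 < (x : ℝ) - y * Real.sqrt D)
    (hindec : ¬ ∃ a b a' b' : ℤ,
      (0 < (a : ℝ) + b * Real.sqrt D ∧ 0 < (a : ℝ) - b * Real.sqrt D) ∧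
      (0 < (a' : ℝ) + b' * Real.sqrt D ∧ 0 < (a' : ℝ) - b' * Real.sqrt D) ∧
      x = a + a' ∧ y = b + b') :
    (x : ℝ) ^ 2 - (D : ℝ) * (y : ℝ) ^ 2 ≤ (D : ℝ) / (N : ℝ) :=
  stmt11_general D hD4 N hN x y hpos hindec
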